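/- arXiv:0901.0687 — 5 statements merged into one kernel-verified Lean document; each statement's English description precedes it below -/
import Mathlib

section
/- There is no integer k satisfying d/g ≤ k ≤ (e-n)/h or e/h ≤ k ≤ (d-m)/g if and only if ⌊(d-m)/g⌋ < e/h and ⌊(e-n)/h⌋ < d/g. -/
/-- There is no integer `k` satisfying `d/g ≤ k ≤ (e-n)/h` or `e/h ≤ k ≤ (d-m)/g`
if and only if `⌊(d-m)/g⌋ < e/h` and `⌊(e-n)/h⌋ < d/g`. -/
theorem stmt0 (d e m n g h : ℤ) (hm : 2 ≤ m) (hn : 2 ≤ n) (hde : (d, e) ≠ (0, 0))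
    (hd : 0 ≤ d) (he : 0 ≤ e) (hg : 0 < g) (hh : 0 < h) :
    (¬ ∃ k : ℤ, ((d : ℚ) / g ≤ (k : ℚ) ∧ (k : ℚ) ≤ ((e : ℚ) - n) / h) ∨
        ((e : ℚ) / h ≤ (k : ℚ) ∧ (k : ℚ) ≤ ((d : ℚ) - m) / g)) ↔
      ((⌊((d : ℚ) - m) / g⌋ : ℚ) < (e : ℚ) / h ∧ (⌊((e : ℚ) - n) / h⌋ : ℚ) < (d : ℚ) / g) := by
  constructor
  · intro H
    constructor
    · by_contra hc
      push_neg at hc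
      exact H ⟨⌊((d : ℚ) - m) / g⌋, Or.inr ⟨hc, Int.floor_le _⟩⟩
    · by_contra hc
      push_neg at hc
      exact H ⟨⌊((e : ℚ) - n) / h⌋, Or.inl ⟨hc, Int.floor_le _⟩⟩
  · rintro ⟨h1, h2⟩ ⟨k, hk | hk⟩
    · have hkf : (k : ℚ) ≤ (⌊((e : ℚ) - n) / h⌋ : ℚ) := by
        exact_mod_cast Int.le_floor.mpr hk.2
      linarith [hk.1]
    · have hkf : (k : ℚ) ≤ (⌊((d : ℚ) - m) / g⌋ : ℚ) := by
        exact_mod_cast Int.le_floor.mpr hk.2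
      linarith [hk.1]
end

section
/- Let A = K[x_1,…,x_m] be a polynomial ring over a field K of prime characteristic p, let d be an integer with 1 ≤ d < m, and let f = x_1^d + x_2⋯x_{d+1}. Then x_1^{(d-1)p+1} ∉ (x_2^p, …, x_m^p, f)A. -/
open MvPolynomial

/-- For `f = x₁^d + x₂⋯x_{d+1}` in `K[x₁,…,x_m]`, `char K = p`, `1 ≤ d < m`, one has
`x₁^{(d-1)p+1} ∉ (x₂^p, …, x_m^p, f)`.  (Variables are indexed by `Fin m`, with
`x₁ = X ⟨0,_⟩` and `x₂,…,x_{d+1}` the variables `X i` with `1 ≤ i ≤ d`.) -/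
theorem stmt3 (p : ℕ) [Fact p.Prime] (K : Type*) [Field K] [CharP K p]
    (m d : ℕ) (hd : 1 ≤ d) (hdm : d < m) :
    (X (⟨0, by omega⟩ : Fin m)) ^ ((d - 1) * p + 1) ∉
      Ideal.span
        ({(X (⟨0, by omega⟩ : Fin m)) ^ d +
            ∏ i ∈ Finset.univ.filter (fun i : Fin m => 1 ≤ (i : ℕ) ∧ (i : ℕ) ≤ d), X i} ∪
          {q : MvPolynomial (Fin m) K | ∃ i : Fin m, (i : ℕ) ≠ 0 ∧ q = (X i) ^ p}) := by
  classical
  intro hmem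
  have hp2 : 2 ≤ p := (Fact.out : p.Prime).two_le
  obtain ⟨N, hNdef⟩ : ∃ N, N = (d - 1) * p + 1 := ⟨_, rfl⟩
  rw [← hNdef] at hmem
  set m0 : Fin m := ⟨0, by omega⟩ with hm0def
  set D : Finset (Fin m) :=
    Finset.univ.filter (fun i : Fin m => 1 ≤ (i : ℕ) ∧ (i : ℕ) ≤ d) with hDdef
  have hd1 : d - 1 + 1 = d := by omega
  have hdN : d ≤ N := by
    have h1 : d - 1 ≤ (d - 1) * p :=
      Nat.le_mul_of_pos_right (d - 1) (by omega)
    omega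
  have hNpd : N < p * d := by
    have h4 : p * d = p * (d - 1) + p := by
      calc p * d = p * (d - 1 + 1) := by rw [hd1]
      _ = p * (d - 1) + p := by ring
    have h5 : (d - 1) * p = p * (d - 1) := by ring
    omega
  set E : Fin m →₀ ℕ := ∑ i ∈ D, Finsupp.single i 1 with hEdef
  have hE_apply : ∀ j : Fin m, E j = if j ∈ D then 1 else 0 := by
    intro j
    rw [hEdef, Finsupp.finset_sum_apply]
    simp [Finsupp.single_apply]
  have h0D : m0 ∉ D := by simp [hDdef, hm0def]
  have hi1D : (⟨1, by omega⟩ : Fin m) ∈ D := by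
    simp [hDdef]; omega
  have hi1m0 : (⟨1, by omega⟩ : Fin m) ≠ m0 := by
    simp [hm0def, Fin.ext_iff]
  -- the product is a monomial
  have hEsupp : E.support = D := by
    ext j
    simp [Finsupp.mem_support_iff, hE_apply]
  have hprod : (∏ i ∈ D, X i : MvPolynomial (Fin m) K) = monomial E 1 := by
    rw [← prod_X_pow_eq_monomial, hEsupp]
    apply Finset.prod_congr rfl
    intro j hj
    rw [hE_apply, if_pos hj, pow_one]
  -- split the membership
  rw [Ideal.span_union, Submodule.mem_sup] at hmem
  obtain ⟨y, hy, b, hb, hsum⟩ := hmem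
  rw [Ideal.mem_span_singleton'] at hy
  obtain ⟨a, ha⟩ := hy
  have hx : (X m0 ^ N : MvPolynomial (Fin m) K)
      = a * (X m0 ^ d) + a * monomial E 1 + b := by
    rw [← hsum, ← ha, ← hprod]; ring
  -- coefficients of elements of the second span vanish on small exponents
  have hb0 : ∀ q ∈ Ideal.span
      {q : MvPolynomial (Fin m) K | ∃ i : Fin m, (i : ℕ) ≠ 0 ∧ q = (X i) ^ p},
      ∀ ν : Fin m →₀ ℕ, (∀ i : Fin m, (i : ℕ) ≠ 0 → ν i < p) → coeff ν q = 0 := by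
    intro q hq
    refine Submodule.span_induction ?_ ?_ ?_ ?_ hq
    · rintro q ⟨i, hi, rfl⟩ ν hν
      rw [X_pow_eq_monomial, coeff_monomial, if_neg]
      intro h
      have h2 := hν i hi
      rw [← h, Finsupp.single_apply, if_pos rfl] at h2
      omega
    · intro ν _; simp
    · intro q r _ _ hq hr ν hν
      simp [coeff_add, hq ν hν, hr ν hν]
    · intro r q _ hq ν hν
      rw [smul_eq_mul, coeff_mul]
      refine Finset.sum_eq_zero ?_
      rintro ⟨u, v⟩ huv
      rw [Finset.HasAntidiagonal.mem_antidiagonal] at huv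
      have hvq : coeff v q = 0 := by
        refine hq v (fun i hi => lt_of_le_of_lt ?_ (hν i hi))
        have : u i + v i = ν i := by rw [← huv]; simp
        omega
      simp [hvq]
  -- the distinguished exponents
  set σf : ℕ → (Fin m →₀ ℕ) := fun k => Finsupp.single m0 (N - k * d) + k • E with hσf
  set τf : ℕ → (Fin m →₀ ℕ) :=
    fun k => Finsupp.single m0 (N - (k + 1) * d) + k • E with hτf
  have hσ_apply : ∀ (k : ℕ) (j : Fin m),
      σf k j = (if j = m0 then N - k * d else 0) + (if j ∈ D then k else 0) := by
    intro k j
    rw [hσf]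
    simp only [Finsupp.add_apply, Finsupp.smul_apply, Finsupp.single_apply, hE_apply,
      smul_eq_mul, mul_ite, mul_one, mul_zero]
    congr 1
    split <;> split <;> first | rfl | simp_all
  have hτ_apply : ∀ (k : ℕ) (j : Fin m),
      τf k j = (if j = m0 then N - (k + 1) * d else 0) + (if j ∈ D then k else 0) := by
    intro k j
    rw [hτf]
    simp only [Finsupp.add_apply, Finsupp.smul_apply, Finsupp.single_apply, hE_apply,
      smul_eq_mul, mul_ite, mul_one, mul_zero]
    congr 1
    split <;> split <;> first | rfl | simp_all
  -- coefficient of X m0 ^ N at σf k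
  have hXN : ∀ k : ℕ, coeff (σf k) (X m0 ^ N : MvPolynomial (Fin m) K)
      = if k = 0 then 1 else 0 := by
    intro k
    rw [X_pow_eq_monomial, coeff_monomial]
    rcases Nat.eq_zero_or_pos k with hk | hk
    · subst hk
      have h0 : σf 0 = Finsupp.single m0 N := by simp [hσf]
      rw [h0, if_pos rfl, if_pos rfl]
    · rw [if_neg, if_neg (by omega)]
      intro h
      have h2 := congrArg (fun g : Fin m →₀ ℕ => g ⟨1, by omega⟩) h
      simp only [Finsupp.single_apply, hσ_apply] at h2
      rw [if_neg (Ne.symm hi1m0), if_neg hi1m0, if_pos hi1D] at h2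
      omega
  -- coefficient of b at σf k
  have hbk : ∀ k : ℕ, k < p → coeff (σf k) b = 0 := by
    intro k hk
    refine hb0 b hb _ (fun i hi => ?_)
    have him0 : i ≠ m0 := by
      intro h; apply hi; rw [h]
    rw [hσ_apply, if_neg him0]
    split <;> omega
  -- coefficient of a * X m0 ^ d at σf k, surviving case
  have hXd : ∀ k : ℕ, (k + 1) * d ≤ N →
      coeff (σf k) (a * X m0 ^ d) = coeff (τf k) a := by
    intro k hk
    have hρ : σf k = τf k + Finsupp.single m0 d := by
      refine Finsupp.ext fun j => ?_
      rw [hσ_apply, Finsupp.add_apply, hτ_apply, Finsupp.single_apply]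
      by_cases hj : j = m0
      · rw [hj]
        simp [h0D]
        have h2 : (k + 1) * d = k * d + d := by ring
        omega
      · simp [hj, Ne.symm hj]
    rw [X_pow_eq_monomial, hρ, coeff_mul_monomial, mul_one]
  -- coefficient of a * X m0 ^ d at σf k, vanishing case
  have hXd0 : ∀ k : ℕ, k * d ≤ N → N < (k + 1) * d →
      coeff (σf k) (a * X m0 ^ d) = 0 := by
    intro k hk hk2
    rw [X_pow_eq_monomial, coeff_mul_monomial', if_neg]
    intro hle
    rw [Finsupp.le_def] at hle
    have h2 := hle m0
    rw [Finsupp.single_apply, if_pos rfl, hσ_apply, if_pos rfl, if_neg h0D] at h2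
    have h3 : (k + 1) * d = k * d + d := by ring
    omega
  -- coefficient of a * monomial E 1 at σf k, k ≥ 1
  have hEterm : ∀ k : ℕ, 1 ≤ k →
      coeff (σf k) (a * monomial E 1) = coeff (τf (k - 1)) a := by
    intro k hk
    have hρ : σf k = τf (k - 1) + E := by
      refine Finsupp.ext fun j => ?_
      rw [hσ_apply, Finsupp.add_apply, hτ_apply, hE_apply]
      by_cases hj : j = m0
      · rw [hj]
        simp [h0D]
        have h2 : k - 1 + 1 = k := by omega
        rw [h2]
      · simp [hj]
        by_cases hjD : j ∈ D
        · simp [hjD]; omega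
        · simp [hjD]
    rw [hρ, coeff_mul_monomial, mul_one]
  -- coefficient of a * monomial E 1 at σf 0
  have hE0 : coeff (σf 0) (a * monomial E 1) = 0 := by
    rw [coeff_mul_monomial', if_neg]
    intro hle
    rw [Finsupp.le_def] at hle
    have h2 := hle ⟨1, by omega⟩
    rw [hE_apply, if_pos hi1D, hσ_apply, if_neg hi1m0, if_pos hi1D] at h2
    omega
  -- main coefficient equation
  have heq : ∀ k : ℕ, coeff (σf k) (X m0 ^ N : MvPolynomial (Fin m) K)
      = coeff (σf k) (a * X m0 ^ d) + coeff (σf k) (a * monomial E 1)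
        + coeff (σf k) b := by
    intro k
    rw [hx, coeff_add, coeff_add]
  -- the critical index
  obtain ⟨k0, hk0def⟩ : ∃ k0, k0 = N / d := ⟨_, rfl⟩
  have hk01 : 1 ≤ k0 := by
    rw [hk0def]; exact (Nat.one_le_div_iff (by omega)).mpr hdN
  have hk0p : k0 < p := by
    rw [hk0def]
    exact Nat.div_lt_of_lt_mul (by rw [mul_comm] at hNpd; exact hNpd)
  have hk0d : k0 * d ≤ N := by
    rw [hk0def]; exact Nat.div_mul_le_self N d
  have hk0d2 : N < (k0 + 1) * d := by
    have h1 := Nat.div_add_mod N d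
    rw [← hk0def] at h1
    have h2 : N % d < d := Nat.mod_lt _ (by omega)
    obtain ⟨r, hr⟩ : ∃ r, r = N % d := ⟨_, rfl⟩
    rw [← hr] at h1 h2
    have h3 : (k0 + 1) * d = d * k0 + d := by ring
    omega
  -- inductive claim
  have claim : ∀ k : ℕ, k + 1 ≤ k0 → coeff (τf k) a = (-1 : K) ^ k := by
    intro k
    induction k with
    | zero =>
      intro _
      have h1 := heq 0
      rw [hXN 0, if_pos rfl, hXd 0 (by simp only [zero_add, one_mul]; exact hdN),
        hE0, hbk 0 (by omega)] at h1
      have : coeff (τf 0) a = 1 := by linear_combination -h1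
      rw [this]; norm_num
    | succ n ih =>
      intro hk
      have hnd : (n + 1 + 1) * d ≤ N := by
        calc (n + 1 + 1) * d ≤ k0 * d := Nat.mul_le_mul_right d hk
        _ ≤ N := hk0d
      have hnp : n + 1 < p := by omega
      have h1 := heq (n + 1)
      rw [hXN (n + 1), if_neg (by omega), hXd (n + 1) hnd,
        hEterm (n + 1) (by omega), hbk (n + 1) hnp] at h1
      simp only [Nat.add_sub_cancel] at h1
      rw [ih (by omega)] at h1
      linear_combination -h1
  -- final contradiction at k = k0
  have h1 := heq k0
  rw [hXN k0, if_neg (by omega), hXd0 k0 hk0d hk0d2, hEterm k0 hk01, hbk k0 hk0p,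
    claim (k0 - 1) (by omega)] at h1
  rw [zero_add, add_zero] at h1
  exact pow_ne_zero _ (neg_ne_zero.mpr (one_ne_zero)) h1.symm
end

section
/- Let B = K[x_1,…,x_m,y_1,…,y_n] be a polynomial ring over a field K of prime characteristic p, with d < m and e < n positive integers, and f = x_1^d y_1^e + x_2⋯x_{d+1} y_2⋯y_{e+1}. Then x_1^{(d+e-1)p+1} ∉ (x_1^p - y_1^p, x_2^p, …, x_m^p, y_2^p, …, y_n^p, f)B. -/
open MvPolynomial

lemma aux1 {σ K : Type*} [CommSemiring K] {D s' : σ →₀ ℕ} (h : ¬ s' ≤ D)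
    (b : MvPolynomial σ K) (c : K) :
    MvPolynomial.coeff D (b * MvPolynomial.monomial s' c) = 0 := by
  classical
  rw [MvPolynomial.coeff_mul_monomial', if_neg h]

lemma aux2 {σ K : Type*} [CommSemiring K] {D : σ →₀ ℕ} {s : σ} {k : ℕ} (h : D s < k)
    (b : MvPolynomial σ K) :
    MvPolynomial.coeff D (b * MvPolynomial.X s ^ k) = 0 := by
  rw [MvPolynomial.X_pow_eq_monomial]
  refine aux1 (fun hle => ?_) b 1
  have := Finsupp.single_le_iff.mp hle
  omega

lemma aux3 {σ K : Type*} [CommSemiring K] (T : Finset σ) :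
    (∏ s ∈ T, MvPolynomial.X s : MvPolynomial σ K)
      = MvPolynomial.monomial (∑ s ∈ T, Finsupp.single s 1) 1 := by
  classical
  induction T using Finset.induction_on with
  | empty => simp
  | insert _ _ h ih =>
      rw [Finset.prod_insert h, Finset.sum_insert h, ih, MvPolynomial.X,
        MvPolynomial.monomial_mul, one_mul]

/-- For `f = x₁^d y₁^e + x₂⋯x_{d+1} y₂⋯y_{e+1}` in `B = K[x₁,…,x_m,y₁,…,y_n]`,
`char K = p`, `1 ≤ d < m`, `1 ≤ e < n`, one has
`x₁^{(d+e-1)p+1} ∉ (x₁^p - y₁^p, x₂^p, …, x_m^p, y₂^p, …, y_n^p, f)B`.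
(The `x`-variables are indexed by `Sum.inl i`, `i : Fin m`, and the `y`-variables by
`Sum.inr j`, `j : Fin n`.) -/
theorem stmt4 (p : ℕ) [Fact p.Prime] (K : Type*) [Field K] [CharP K p]
    (m n d e : ℕ) (hd : 1 ≤ d) (hdm : d < m) (he : 1 ≤ e) (hen : e < n) :
    (X (Sum.inl (⟨0, by omega⟩ : Fin m)) : MvPolynomial (Fin m ⊕ Fin n) K) ^
        ((d + e - 1) * p + 1) ∉
      Ideal.span
        ({(X (Sum.inl (⟨0, by omega⟩ : Fin m)) : MvPolynomial (Fin m ⊕ Fin n) K) ^ p -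
            (X (Sum.inr (⟨0, by omega⟩ : Fin n))) ^ p,
          (X (Sum.inl (⟨0, by omega⟩ : Fin m))) ^ d *
              (X (Sum.inr (⟨0, by omega⟩ : Fin n))) ^ e +
            (∏ i ∈ Finset.univ.filter (fun i : Fin m => 1 ≤ (i : ℕ) ∧ (i : ℕ) ≤ d),
                X (Sum.inl i)) *
              ∏ j ∈ Finset.univ.filter (fun j : Fin n => 1 ≤ (j : ℕ) ∧ (j : ℕ) ≤ e),
                X (Sum.inr j)} ∪
          {q : MvPolynomial (Fin m ⊕ Fin n) K |
            (∃ i : Fin m, (i : ℕ) ≠ 0 ∧ q = (X (Sum.inl i)) ^ p) ∨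
              ∃ j : Fin n, (j : ℕ) ≠ 0 ∧ q = (X (Sum.inr j)) ^ p}) := by
  intro hmem
  classical
  have hp2 : 2 ≤ p := Nat.Prime.two_le Fact.out
  set x0 : Fin m := ⟨0, by omega⟩ with hx0
  set y0 : Fin n := ⟨0, by omega⟩ with hy0
  set A : Finset (Fin m) := Finset.univ.filter (fun i : Fin m => 1 ≤ (i : ℕ) ∧ (i : ℕ) ≤ d)
    with hAdef
  set Bs : Finset (Fin n) := Finset.univ.filter (fun j : Fin n => 1 ≤ (j : ℕ) ∧ (j : ℕ) ≤ e)
    with hBdef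
  set u : MvPolynomial (Fin m ⊕ Fin n) K := ∏ i ∈ A, X (Sum.inl i) with hudef
  set v : MvPolynomial (Fin m ⊕ Fin n) K := ∏ j ∈ Bs, X (Sum.inr j) with hvdef
  set T : Finset (Fin m ⊕ Fin n) := A.image Sum.inl ∪ Bs.image Sum.inr with hTdef
  set w : (Fin m ⊕ Fin n) →₀ ℕ := ∑ s ∈ T, Finsupp.single s 1 with hwdef
  set N : ℕ := (d + e - 1) * p + 1 with hNdef
  set D : (Fin m ⊕ Fin n) →₀ ℕ := Finsupp.single (Sum.inl x0) N + (p - 1) • w with hDdef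
  set r : Fin m ⊕ Fin n → Fin m ⊕ Fin n :=
    Sum.elim Sum.inl (fun j : Fin n => if (j : ℕ) = 0 then Sum.inl x0 else Sum.inr j) with hrdef
  set F : MvPolynomial (Fin m ⊕ Fin n) K := X (Sum.inl x0) ^ (d + e) + u * v with hFdef
  -- values of w
  have hw : ∀ s, w s = if s ∈ T then 1 else 0 := by
    intro s
    rw [hwdef, Finsupp.finset_sum_apply]
    simp [Finsupp.single_apply]
  have hx0T : Sum.inl x0 ∉ T := by
    simp only [hTdef, Finset.mem_union, Finset.mem_image, not_or]
    constructor
    · rintro ⟨i, hi, hii⟩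
      rw [hAdef, Finset.mem_filter] at hi
      have : i = x0 := Sum.inl.inj hii
      subst this
      simp [hx0] at hi
    · rintro ⟨j, hj, hjj⟩
      exact Sum.inr_ne_inl hjj
  have hs1m : (1 : ℕ) < m := by omega
  have hs1T : Sum.inl (⟨1, hs1m⟩ : Fin m) ∈ T := by
    rw [hTdef, Finset.mem_union]
    left
    rw [Finset.mem_image]
    exact ⟨⟨1, hs1m⟩, by rw [hAdef, Finset.mem_filter]; exact ⟨Finset.mem_univ _, by simp; omega⟩,
      rfl⟩
  have hwle : ∀ s, w s ≤ 1 := by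
    intro s
    rw [hw s]
    split <;> omega
  -- values of D
  have hDx0 : D (Sum.inl x0) = N := by
    rw [hDdef, Finsupp.add_apply, Finsupp.smul_apply, Finsupp.single_eq_same, hw,
      if_neg hx0T]
    simp
  have hDlt : ∀ s, s ≠ Sum.inl x0 → D s < p := by
    intro s hs
    rw [hDdef, Finsupp.add_apply, Finsupp.smul_apply, Finsupp.single_apply,
      if_neg (fun h => hs h.symm)]
    have := hwle s
    have : (p - 1) • w s ≤ (p - 1) * 1 := by
      rw [smul_eq_mul]
      exact Nat.mul_le_mul_left _ this
    omega
  have hDs1 : D (Sum.inl (⟨1, hs1m⟩ : Fin m)) = p - 1 := by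
    rw [hDdef, Finsupp.add_apply, Finsupp.smul_apply, Finsupp.single_apply, hw, if_pos hs1T]
    rw [if_neg]
    · simp
    · intro h
      have := Sum.inl.inj h
      rw [hx0] at this
      exact absurd (congrArg Fin.val this) (by simp)
  -- u * v as a monomial
  have huv : u * v = monomial w 1 := by
    have hA : u = ∏ s ∈ A.image Sum.inl, X s := by
      rw [hudef, Finset.prod_image (fun a _ b _ h => Sum.inl.inj h)]
    have hB : v = ∏ s ∈ Bs.image Sum.inr, X s := by
      rw [hvdef, Finset.prod_image (fun a _ b _ h => Sum.inr.inj h)]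
    have hdisj : Disjoint (A.image Sum.inl) (Bs.image Sum.inr) := by
      rw [Finset.disjoint_left]
      rintro s hs hs'
      rw [Finset.mem_image] at hs hs'
      obtain ⟨i, _, rfl⟩ := hs
      obtain ⟨j, _, h⟩ := hs'
      exact Sum.inr_ne_inl h
    rw [hA, hB, ← Finset.prod_union hdisj, ← hTdef, aux3, ← hwdef]
  -- rename fixes u and v
  have hru : rename r u = u := by
    rw [hudef, map_prod]
    refine Finset.prod_congr rfl fun i _ => ?_
    rw [rename_X]
    rfl
  have hrv : rename r v = v := by
    rw [hvdef, map_prod]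
    refine Finset.prod_congr rfl fun j hj => ?_
    rw [rename_X, hrdef]
    have hj1 : 1 ≤ (j : ℕ) := by
      rw [hBdef, Finset.mem_filter] at hj
      exact hj.2.1
    simp only [Sum.elim_inr]
    rw [if_neg (by omega)]
  have hrx : r (Sum.inl x0) = Sum.inl x0 := rfl
  have hry : r (Sum.inr y0) = Sum.inl x0 := by
    rw [hrdef]
    simp [hy0]
  -- F ^ p
  have hFp : F ^ p = X (Sum.inl x0) ^ ((d + e) * p) + monomial (p • w) 1 := by
    rw [hFdef, add_pow_char, ← pow_mul, huv, monomial_pow, one_pow]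
  -- the key induction
  have key : ∀ b : MvPolynomial (Fin m ⊕ Fin n) K,
      coeff D (b * rename r (X (Sum.inl x0) ^ N) * F ^ (p - 1)) = 0 := by
    refine Submodule.span_induction
      (p := fun z _ => ∀ b : MvPolynomial (Fin m ⊕ Fin n) K,
        coeff D (b * rename r z * F ^ (p - 1)) = 0) ?_ ?_ ?_ ?_ hmem
    · intro z hz b
      simp only [Set.mem_union, Set.mem_insert_iff, Set.mem_singleton_iff,
        Set.mem_setOf_eq] at hz
      rcases hz with (rfl | rfl) | (⟨i, hi, rfl⟩ | ⟨j, hj, rfl⟩)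
      · -- x1^p - y1^p
        have h0 : rename r (X (Sum.inl x0) ^ p - (X (Sum.inr y0) : MvPolynomial (Fin m ⊕ Fin n) K) ^ p) = 0 := by
          rw [map_sub, map_pow, map_pow, rename_X, rename_X, hrx, hry, sub_self]
        rw [h0, mul_zero, zero_mul, coeff_zero]
      · -- f
        have hrf : rename r (X (Sum.inl x0) ^ d * (X (Sum.inr y0) : MvPolynomial (Fin m ⊕ Fin n) K) ^ e + u * v) = F := by
          rw [map_add, map_mul, map_mul, map_pow, map_pow, rename_X, rename_X, hrx, hry,
            hru, hrv, ← pow_add, hFdef]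
        rw [hrf, mul_assoc]
        have hFsucc : F * F ^ (p - 1) = F ^ p := by
          rw [← pow_succ']
          congr 1
          omega
        rw [hFsucc, hFp, mul_add, coeff_add]
        have h1 : coeff D (b * X (Sum.inl x0) ^ ((d + e) * p)) = 0 := by
          refine aux2 ?_ b
          rw [hDx0, hNdef]
          have h2 : (d + e) * p = (d + e - 1) * p + p := by
            obtain ⟨c, hc⟩ : ∃ c, d + e = c + 1 := ⟨d + e - 1, by omega⟩
            rw [hc, Nat.add_sub_cancel, add_mul, one_mul]
          omega
        have h2 : coeff D (b * monomial (p • w) 1) = 0 := by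
          refine aux1 (fun hle => ?_) b 1
          have := Finsupp.le_def.mp hle (Sum.inl (⟨1, hs1m⟩ : Fin m))
          rw [Finsupp.smul_apply, hw, if_pos hs1T, smul_eq_mul, mul_one, hDs1] at this
          omega
        rw [h1, h2, add_zero]
      · -- x_i^p, i ≠ 0
        have hri : rename r ((X (Sum.inl i) : MvPolynomial (Fin m ⊕ Fin n) K) ^ p)
            = X (Sum.inl i) ^ p := by
          rw [map_pow, rename_X]
          rfl
        rw [hri, mul_right_comm]
        refine aux2 ?_ _
        refine lt_of_lt_of_le (hDlt _ ?_) le_rfl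
        intro hcon
        have := Sum.inl.inj hcon
        apply hi
        rw [this, hx0]
      · -- y_j^p, j ≠ 0
        have hrj : rename r ((X (Sum.inr j) : MvPolynomial (Fin m ⊕ Fin n) K) ^ p)
            = X (Sum.inr j) ^ p := by
          rw [map_pow, rename_X, hrdef]
          simp only [Sum.elim_inr]
          rw [if_neg hj]
        rw [hrj, mul_right_comm]
        refine aux2 ?_ _
        exact hDlt _ (fun hcon => Sum.inr_ne_inl hcon)
    · intro b
      simp
    · intro z1 z2 _ _ h1 h2 b
      rw [map_add, mul_add, add_mul, coeff_add, h1 b, h2 b, add_zero]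
    · intro a z _ h b
      rw [smul_eq_mul, map_mul, ← mul_assoc]
      exact h (b * rename r a)
  -- the final computation
  have hfinal := key 1
  rw [one_mul, map_pow, rename_X, hrx] at hfinal
  have hcomp : coeff D (X (Sum.inl x0) ^ N * F ^ (p - 1)) = 1 := by
    rw [hFdef, add_pow, Finset.mul_sum, coeff_sum]
    have hterm : ∀ k,
        X (Sum.inl x0) ^ N *
            ((X (Sum.inl x0) ^ (d + e)) ^ k * (u * v) ^ (p - 1 - k) *
              ((p - 1).choose k : MvPolynomial (Fin m ⊕ Fin n) K))
          = monomial (Finsupp.single (Sum.inl x0) (N + (d + e) * k) + (p - 1 - k) • w)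
              (((p - 1).choose k : K)) := by
      intro k
      have hc : (((p - 1).choose k : ℕ) : MvPolynomial (Fin m ⊕ Fin n) K)
          = C (((p - 1).choose k : ℕ) : K) := by
        rw [map_natCast]
      calc X (Sum.inl x0) ^ N *
            ((X (Sum.inl x0) ^ (d + e)) ^ k * (u * v) ^ (p - 1 - k) *
              ((p - 1).choose k : MvPolynomial (Fin m ⊕ Fin n) K))
          = C (((p - 1).choose k : ℕ) : K) *
              (X (Sum.inl x0) ^ (N + (d + e) * k) * monomial ((p - 1 - k) • w) 1) := by
            rw [huv, monomial_pow, one_pow, ← pow_mul, hc, pow_add]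
            ring
        _ = monomial (Finsupp.single (Sum.inl x0) (N + (d + e) * k) + (p - 1 - k) • w)
              (((p - 1).choose k : K)) := by
            rw [X_pow_eq_monomial, monomial_mul, mul_one, C_mul_monomial, mul_one]
    rw [Finset.sum_congr rfl fun k _ => by rw [hterm k, coeff_monomial]]
    rw [Finset.sum_eq_single_of_mem 0 (Finset.mem_range.mpr (by omega))]
    · rw [if_pos]
      · simp
      · rw [mul_zero, add_zero, Nat.sub_zero, hDdef]
    · intro k _ hk
      rw [if_neg]
      intro hEq
      have hEq0 := congrArg (fun g => g (Sum.inl x0)) hEq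
      rw [Finsupp.add_apply, Finsupp.single_eq_same, Finsupp.smul_apply, hw,
        if_neg hx0T, smul_eq_mul, mul_zero, add_zero, hDx0] at hEq0
      have hpos : 1 ≤ (d + e) * k := Nat.mul_pos (by omega) (Nat.pos_of_ne_zero hk)
      omega
  rw [hcomp] at hfinal
  exact one_ne_zero hfinal
end

section
/- Let A be a standard ℕ-graded K-algebra and a ⊆ A a homogeneous ideal. If the ideal a^h is generated by elements of degree at most g, then the K-algebra K[(a^h)_g] generated by the degree-g component of a^h is isomorphic to the diagonal subalgebra ⊕_{k≥0} (A[at])_{(gk,hk)} of the Rees algebra A[at], where the Rees algebra is ℕ²-graded with deg(r t^j) = (i,j) for r ∈ A_i. -/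
open DirectSum Pointwise

section Aux

variable {K A : Type} [Field K] [CommRing A] [Algebra K A]
  (𝒜 : ℕ → Submodule K A) [GradedAlgebra 𝒜]

/-- Submodule of elements all of whose homogeneous components satisfy `P`. -/
def projQ (P : ℕ → Submodule K A) : Submodule K A where
  carrier := {x | ∀ n, GradedAlgebra.proj 𝒜 n x ∈ P n}
  add_mem' hx hy n := by rw [map_add]; exact add_mem (hx n) (hy n)
  zero_mem' n := by rw [map_zero]; exact zero_mem _
  smul_mem' c x hx n := by rw [map_smul]; exact Submodule.smul_mem _ _ (hx n)

lemma le_projQ {P : ℕ → Submodule K A} (hP : ∀ n, P n ≤ 𝒜 n) (m : ℕ) :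
    P m ≤ projQ 𝒜 P := by
  intro x hx n
  rcases eq_or_ne n m with rfl | hne
  · rwa [GradedAlgebra.proj_apply, DirectSum.decompose_of_mem_same 𝒜 (hP _ hx)]
  · rw [GradedAlgebra.proj_apply, DirectSum.decompose_of_mem_ne 𝒜 (hP _ hx) hne.symm]
    exact zero_mem _

lemma mem_of_mem_iSup_graded {P : ℕ → Submodule K A} (hP : ∀ n, P n ≤ 𝒜 n)
    {x : A} {m : ℕ} (hx : x ∈ ⨆ n, P n) (hm : x ∈ 𝒜 m) : x ∈ P m := by
  have hQ : x ∈ projQ 𝒜 P := (iSup_le fun n => le_projQ 𝒜 hP n) hx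
  have := hQ m
  rwa [GradedAlgebra.proj_apply, DirectSum.decompose_of_mem_same 𝒜 hm] at this

lemma pow_one_le (n : ℕ) : (𝒜 1) ^ n ≤ 𝒜 n := by
  induction n with
  | zero =>
    rw [pow_zero, Submodule.one_eq_span, Submodule.span_le, Set.singleton_subset_iff]
    exact SetLike.one_mem_graded 𝒜
  | succ n ih =>
    rw [pow_succ]
    exact Submodule.mul_le.2 fun x hx y hy => SetLike.mul_mem_graded (ih hx) hy

lemma grading_eq (hstd : Algebra.adjoin K (𝒜 1 : Set A) = ⊤) (n : ℕ) :
    𝒜 n = (𝒜 1) ^ n := by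
  refine le_antisymm ?_ (pow_one_le 𝒜 n)
  intro x hx
  have hx' : x ∈ Submodule.span K (Submonoid.closure (𝒜 1 : Set A) : Set A) := by
    have hx2 : x ∈ Subalgebra.toSubmodule (Algebra.adjoin K ((𝒜 1 : Submodule K A) : Set A)) := by
      rw [hstd, Algebra.top_toSubmodule]
      exact Submodule.mem_top
    rwa [Algebra.adjoin_eq_span] at hx2
  have hsup : x ∈ ⨆ m : ℕ, (𝒜 1) ^ m := by
    refine Submodule.span_le.2 ?_ hx'
    intro w hw
    have : ∃ m : ℕ, w ∈ (𝒜 1) ^ m := by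
      induction hw using Submonoid.closure_induction with
      | mem y hy => exact ⟨1, by rwa [pow_one]⟩
      | one =>
        refine ⟨0, ?_⟩
        rw [pow_zero, Submodule.one_eq_span]
        exact Submodule.mem_span_singleton_self 1
      | mul y z _ _ hy hz =>
        obtain ⟨m1, h1⟩ := hy
        obtain ⟨m2, h2⟩ := hz
        exact ⟨m1 + m2, by rw [pow_add]; exact Submodule.mul_mem_mul h1 h2⟩
    obtain ⟨m, hm⟩ := this
    exact SetLike.mem_coe.mpr (Submodule.mem_iSup_of_mem m hm)
  exact mem_of_mem_iSup_graded 𝒜 (pow_one_le 𝒜) hsup hx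

end Aux

section Key

variable {K A : Type} [Field K] [CommRing A] [Algebra K A]
  (𝒜 : ℕ → Submodule K A) [GradedAlgebra 𝒜]

lemma mul_le_graded (hstd : Algebra.adjoin K (𝒜 1 : Set A) = ⊤) (p q : ℕ) :
    𝒜 (p + q) ≤ 𝒜 p * 𝒜 q := by
  rw [grading_eq 𝒜 hstd (p + q), pow_add]
  exact mul_le_mul' (pow_one_le 𝒜 p) (pow_one_le 𝒜 q)

lemma list_key (hstd : Algebra.adjoin K (𝒜 1 : Set A) = ⊤)
    (a : Ideal A) (g h : ℕ)
    (L : List (A × ℕ)) (m : ℕ) (c : A) (hc : c ∈ 𝒜 m)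
    (hL : ∀ p ∈ L, p.1 ∈ (a ^ h : Ideal A) ∧ p.1 ∈ 𝒜 p.2 ∧ p.2 ≤ g)
    (hsum : m + (L.map Prod.snd).sum = g * L.length) :
    c * (L.map Prod.fst).prod ∈
      Algebra.adjoin K (((a ^ h : Ideal A) : Set A) ∩ (𝒜 g : Set A)) := by
  induction L generalizing m c with
  | nil =>
    simp only [List.map_nil, List.sum_nil, List.length_nil, Nat.mul_zero,
      Nat.add_zero, List.prod_nil, mul_one] at hsum ⊢
    subst hsum
    have hc1 : c ∈ (1 : Submodule K A) := by
      rw [← pow_zero (𝒜 1), ← grading_eq 𝒜 hstd 0]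
      exact hc
    obtain ⟨y, hy⟩ := Submodule.mem_one.mp hc1
    rw [← hy]
    exact Subalgebra.algebraMap_mem _ y
  | cons p L ih =>
    obtain ⟨f, d⟩ := p
    have hf := hL (f, d) List.mem_cons_self
    have hL' : ∀ q ∈ L, q.1 ∈ (a ^ h : Ideal A) ∧ q.1 ∈ 𝒜 q.2 ∧ q.2 ≤ g :=
      fun q hq => hL q (List.mem_cons_of_mem _ hq)
    simp only [List.map_cons, List.sum_cons, List.length_cons] at hsum
    rw [Nat.mul_succ] at hsum
    have hS : (L.map Prod.snd).sum ≤ g * L.length := by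
      have := List.sum_le_card_nsmul (L.map Prod.snd) g (by
        intro x hx
        obtain ⟨q, hq, rfl⟩ := List.mem_map.mp hx
        exact (hL' q hq).2.2)
      simpa [smul_eq_mul, List.length_map, Nat.mul_comm] using this
    have hd : d ≤ g := hf.2.2
    have hmean : (g - d) + (m - (g - d)) = m := by omega
    have hc' : c ∈ 𝒜 (g - d) * 𝒜 (m - (g - d)) := by
      refine mul_le_graded 𝒜 hstd _ _ ?_
      rwa [hmean]
    simp only [List.map_cons, List.prod_cons]
    rw [← mul_assoc]
    refine Submodule.mul_induction_on hc' ?_ ?_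
    · intro r hr s hs
      have hrw : r * s * f * (L.map Prod.fst).prod
          = (r * f) * (s * (L.map Prod.fst).prod) := by ring
      rw [hrw]
      refine mul_mem (Algebra.subset_adjoin ?_) (ih _ _ hs hL' (by omega))
      constructor
      · exact Ideal.mul_mem_left _ r hf.1
      · have := SetLike.mul_mem_graded hr hf.2.1
        rwa [Nat.sub_add_cancel hd] at this
    · intro x y hx hy
      rw [add_mul, add_mul]
      exact add_mem hx hy

lemma key2 (hstd : Algebra.adjoin K (𝒜 1 : Set A) = ⊤)
    (a : Ideal A) (g h : ℕ) (G : Set A)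
    (hGsub : G ⊆ ((a ^ h : Ideal A) : Set A))
    (hGdeg : ∀ x ∈ G, ∃ i ≤ g, x ∈ 𝒜 i)
    (hGspan : a ^ h = Ideal.span G)
    (k : ℕ) (x : A) (hx : x ∈ a ^ (h * k)) (hxg : x ∈ 𝒜 (g * k)) :
    x ∈ Algebra.adjoin K (((a ^ h : Ideal A) : Set A) ∩ (𝒜 g : Set A)) := by
  classical
  rw [pow_mul, hGspan] at hx
  have hps : Ideal.span G ^ k = Submodule.span A (G ^ k) := Submodule.span_pow G k
  rw [hps] at hx
  obtain ⟨cf, hsupp, rfl⟩ := Submodule.mem_span_set.mp hx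
  set B := Algebra.adjoin K (((a ^ h : Ideal A) : Set A) ∩ (𝒜 g : Set A)) with hB
  have hx2 : GradedAlgebra.proj 𝒜 (g * k) (cf.sum fun y r => r • y) ∈ B := by
    rw [Finsupp.sum, map_sum]
    refine Subalgebra.sum_mem _ ?_
    intro y hy
    have hyG : y ∈ G ^ k := hsupp hy
    obtain ⟨fv, hprod⟩ := Set.mem_pow.mp hyG
    choose dd hdle hdmem using fun i : Fin k => hGdeg _ (fv i).2
    set L : List (A × ℕ) := List.ofFn (fun i => ((fv i : A), dd i)) with hLdef
    have hfst : (L.map Prod.fst).prod = y := by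
      rw [hLdef, List.map_ofFn]
      exact hprod
    have hlen : L.length = k := by simp [hLdef]
    have hmemL : ∀ p ∈ L, p.1 ∈ (a ^ h : Ideal A) ∧ p.1 ∈ 𝒜 p.2 ∧ p.2 ≤ g := by
      intro p hp
      rw [hLdef, List.mem_ofFn] at hp
      obtain ⟨i, hi⟩ := hp
      cases hi
      exact ⟨hGsub (fv i).2, hdmem i, hdle i⟩
    have hyD : y ∈ 𝒜 ((L.map Prod.snd).sum) := by
      rw [← hfst]
      exact SetLike.list_prod_map_mem_graded L Prod.snd Prod.fst
        (fun p hp => (hmemL p hp).2.1)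
    rw [smul_eq_mul, ← DirectSum.sum_support_decompose 𝒜 (cf y), Finset.sum_mul, map_sum]
    refine Subalgebra.sum_mem _ ?_
    intro m _
    have hrm : ((DirectSum.decompose 𝒜 (cf y) m : 𝒜 m) : A) ∈ 𝒜 m :=
      (DirectSum.decompose 𝒜 (cf y) m).2
    have hmul : ((DirectSum.decompose 𝒜 (cf y) m : 𝒜 m) : A) * y
        ∈ 𝒜 (m + (L.map Prod.snd).sum) := SetLike.mul_mem_graded hrm hyD
    by_cases hcase : m + (L.map Prod.snd).sum = g * k
    · have hkey := list_key 𝒜 hstd a g h L m _ hrm hmemL (by rw [hlen]; exact hcase)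
      rw [hfst] at hkey
      rw [GradedAlgebra.proj_apply,
        DirectSum.decompose_of_mem_same 𝒜 (show _ ∈ 𝒜 (g * k) by rwa [hcase] at hmul)]
      exact hkey
    · rw [GradedAlgebra.proj_apply, DirectSum.decompose_of_mem_ne 𝒜 hmul hcase]
      exact zero_mem _
  rwa [GradedAlgebra.proj_apply, DirectSum.decompose_of_mem_same 𝒜 hxg] at hx2

end Key

noncomputable def evalOneAlgHom (K A : Type) [Field K] [CommRing A] [Algebra K A] :
    Polynomial A →ₐ[K] A :=
  { Polynomial.evalRingHom (1 : A) with
    commutes' := fun k => by simp [Polynomial.algebraMap_apply] }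

@[simp] lemma evalOneAlgHom_apply {K A : Type} [Field K] [CommRing A] [Algebra K A]
    (p : Polynomial A) : evalOneAlgHom K A p = Polynomial.eval 1 p := rfl



/-- Let `A` be a standard `ℕ`-graded `K`-algebra and `a ⊆ A` a homogeneous ideal.  If
`a^h` is generated by elements of degree at most `g`, then the `K`-algebra
`K[(a^h)_g]` generated by the degree-`g` component of `a^h` is isomorphic to the
diagonal subalgebra `⊕_{k≥0} (A[at])_{(gk,hk)}` of the Rees algebra `A[at] ⊆ A[t]`,
whose `(i,j)`-component is `(a^j ∩ A_i)·t^j`. -/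
theorem stmt8 (K : Type) [Field K] (A : Type) [CommRing A] [Algebra K A]
    (𝒜 : ℕ → Submodule K A) [GradedAlgebra 𝒜]
    (hstd : Algebra.adjoin K (𝒜 1 : Set A) = ⊤)
    (a : Ideal A) (ha : Ideal.IsHomogeneous 𝒜 a)
    (g h : ℕ) (hg : 0 < g) (hh : 0 < h)
    (hgen : ∃ G : Set A, G ⊆ (a ^ h : Ideal A) ∧
      (∀ x ∈ G, ∃ i ≤ g, x ∈ 𝒜 i) ∧ a ^ h = Ideal.span G)
    (D : Subalgebra K (Polynomial A))
    (hD : Subalgebra.toSubmodule D = ⨆ k : ℕ,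
      Submodule.map (LinearMap.restrictScalars K (Polynomial.monomial (R := A) (h * k)))
        (Submodule.restrictScalars K (a ^ (h * k)) ⊓ 𝒜 (g * k))) :
    Nonempty
      ((Algebra.adjoin K (((a ^ h : Ideal A) : Set A) ∩ (𝒜 g : Set A))) ≃ₐ[K] D) := by
  classical
  obtain ⟨G, hGsub, hGdeg, hGspan⟩ := hgen
  set B := Algebra.adjoin K (((a ^ h : Ideal A) : Set A) ∩ (𝒜 g : Set A)) with hB
  set N : ℕ → Submodule K A :=
    fun k => Submodule.restrictScalars K (a ^ (h * k)) ⊓ 𝒜 (g * k) with hN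
  set M : ℕ → Submodule K (Polynomial A) :=
    fun k => Submodule.map
      (LinearMap.restrictScalars K (Polynomial.monomial (R := A) (h * k))) (N k) with hM
  have hD' : Subalgebra.toSubmodule D = ⨆ k, M k := hD
  set φ := evalOneAlgHom K A with hφ
  set ψ := φ.comp D.val with hψ
  -- the coefficient submodules
  set Cn : ℕ → Submodule K A := fun n => ⨆ k, ⨆ _ : n = h * k, N k with hCn
  set QP : Submodule K (Polynomial A) :=
    { carrier := {p | ∀ n, p.coeff n ∈ Cn n}
      add_mem' := fun hx hy n => by
        rw [Polynomial.coeff_add]; exact add_mem (hx n) (hy n)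
      zero_mem' := fun n => by rw [Polynomial.coeff_zero]; exact zero_mem _
      smul_mem' := fun c p hp n => by
        rw [Polynomial.coeff_smul]; exact Submodule.smul_mem _ _ (hp n) } with hQP
  have hMQP : ∀ k, M k ≤ QP := by
    rintro k p ⟨x, hx, rfl⟩ n
    simp only [LinearMap.coe_restrictScalars]
    rw [Polynomial.coeff_monomial]
    by_cases hnk : h * k = n
    · rw [if_pos hnk]
      exact Submodule.mem_iSup_of_mem k (Submodule.mem_iSup_of_mem hnk.symm hx)
    · rw [if_neg hnk]; exact zero_mem _
  have hpQ : ∀ p ∈ D, ∀ n, p.coeff n ∈ Cn n := by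
    intro p hp n
    have hp' : p ∈ (⨆ k, M k : Submodule K (Polynomial A)) := by
      rw [← hD']; exact (Subalgebra.mem_toSubmodule D).mpr hp
    exact (iSup_le hMQP) hp' n
  have hCn1 : ∀ k, Cn (h * k) ≤ N k := by
    intro k
    refine iSup_le fun k' => iSup_le fun hk' => ?_
    have : k' = k := by
      have := Nat.eq_of_mul_eq_mul_left hh hk'.symm
      omega
    subst this; exact le_rfl
  have hCn2 : ∀ n, (¬ ∃ k, n = h * k) → Cn n ≤ ⊥ := by
    intro n hn
    exact iSup_le fun k => iSup_le fun hk => absurd ⟨k, hk⟩ hn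
  have heval : ∀ p : Polynomial A, Polynomial.eval 1 p = ∑ n ∈ p.support, p.coeff n := by
    intro p
    rw [Polynomial.eval_eq_sum, Polynomial.sum]
    simp
  -- injectivity
  have hinj : Function.Injective ψ := by
    rw [injective_iff_map_eq_zero]
    rintro ⟨p, hpD⟩ hp0
    have hpC : ∀ n, p.coeff n ∈ Cn n := hpQ p hpD
    have hsum0 : ∑ n ∈ p.support, p.coeff n = 0 := by
      rw [← heval p]
      exact hp0
    have hcoeff : ∀ n, p.coeff n = 0 := by
      intro n
      by_cases hex : ∃ k, n = h * k
      · obtain ⟨k, rfl⟩ := hex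
        have h0 : ∑ n ∈ p.support, GradedAlgebra.proj 𝒜 (g * k) (p.coeff n) = 0 := by
          rw [← map_sum, hsum0, map_zero]
        have hterm : ∀ j ∈ p.support,
            GradedAlgebra.proj 𝒜 (g * k) (p.coeff j)
              = if j = h * k then p.coeff (h * k) else 0 := by
          intro j _
          by_cases hjk : j = h * k
          · subst hjk
            rw [if_pos rfl, GradedAlgebra.proj_apply,
              DirectSum.decompose_of_mem_same 𝒜 (hCn1 k (hpC (h * k))).2]
          · rw [if_neg hjk]
            by_cases hex' : ∃ k', j = h * k'
            · obtain ⟨k', rfl⟩ := hex'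
              have hmem : p.coeff (h * k') ∈ 𝒜 (g * k') := (hCn1 k' (hpC _)).2
              have hne : g * k' ≠ g * k := by
                intro hgk
                exact hjk (by rw [Nat.eq_of_mul_eq_mul_left hg hgk])
              rw [GradedAlgebra.proj_apply, DirectSum.decompose_of_mem_ne 𝒜 hmem hne]
            · have hz : p.coeff (j) = 0 := by
                simpa using hCn2 j hex' (hpC j)
              rw [hz, map_zero]
        rw [Finset.sum_congr rfl hterm, Finset.sum_ite_eq' p.support (h * k)] at h0
        by_cases hks : h * k ∈ p.support
        · rwa [if_pos hks] at h0
        · exact Polynomial.notMem_support_iff.mp hks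
      · simpa using hCn2 n hex (hpC n)
    exact Subtype.ext (Polynomial.ext hcoeff)
  -- range
  have hrange : ψ.range = B := by
    apply le_antisymm
    · rintro _ ⟨⟨p, hpD⟩, rfl⟩
      have hp' : p ∈ (⨆ k, M k : Submodule K (Polynomial A)) := by
        rw [← hD']; exact (Subalgebra.mem_toSubmodule D).mpr hpD
      have hle : (⨆ k, M k : Submodule K (Polynomial A))
          ≤ Submodule.comap φ.toLinearMap (Subalgebra.toSubmodule B) := by
        refine iSup_le fun k => ?_
        rintro q ⟨x, hx, rfl⟩
        simp only [hφ, Submodule.mem_comap, AlgHom.toLinearMap_apply,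
          Subalgebra.mem_toSubmodule, LinearMap.coe_restrictScalars,
          evalOneAlgHom_apply, Polynomial.eval_monomial, one_pow, mul_one]
        exact key2 𝒜 hstd a g h G hGsub hGdeg hGspan k x hx.1 hx.2
      have := hle hp'
      exact this
    · rw [hB, Algebra.adjoin_le_iff]
      rintro x ⟨hx1, hx2⟩
      have hq : (Polynomial.monomial h x) ∈ D := by
        rw [← Subalgebra.mem_toSubmodule, hD']
        refine Submodule.mem_iSup_of_mem 1 ?_
        refine ⟨x, ?_, ?_⟩
        · constructor
          · simpa [mul_one] using hx1
          · simpa [mul_one] using hx2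
        · simp [mul_one]
      exact ⟨⟨Polynomial.monomial h x, hq⟩, by
        simp [hψ, hφ, Polynomial.eval_monomial]⟩
  exact ⟨((AlgEquiv.ofInjective ψ hinj).trans (Subalgebra.equivOfEq _ _ hrange)).symm⟩
end

section
/- Let R be an ℕ-graded ring finitely generated over R_0 and r ∈ R a homogeneous element of degree strictly greater than a positive integer n. Then the degree-zero part of the homogeneous localization of the ℕ-filtered Rees ring R^♮ = ⊕_{i≥0} R_{≥i} T^i at the element rT^n equals the localization R_r; that is, [R^♮_{rT^n}]_0 = R + (1/r)R_{≥n} + (1/r²)R_{≥2n} + ⋯ = R_r. -/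
lemma mul_mem_aux (R₀ : Type) [CommRing R₀] (R : Type) [CommRing R] [Algebra R₀ R]
    (𝒜 : ℕ → Submodule R₀ R) [GradedAlgebra 𝒜] (N : ℕ) (a b : R) (i : ℕ)
    (hb : b ∈ 𝒜 i) (hi : N ≤ i) : a * b ∈ ⨆ i : ℕ, ⨆ _ : N ≤ i, 𝒜 i := by
  induction a using DirectSum.Decomposition.inductionOn 𝒜 with
  | zero => simp
  | @homogeneous d x =>
      exact Submodule.mem_iSup_of_mem (d + i) (Submodule.mem_iSup_of_mem
        (hi.trans (Nat.le_add_left i d)) (SetLike.mul_mem_graded x.2 hb))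
  | add x y hx hy =>
      rw [add_mul]; exact Submodule.add_mem _ hx hy

/-- Let `R` be an `ℕ`-graded ring finitely generated over `R₀` and `r` a homogeneous
element of degree `> n ≥ 1`.  The degree-zero part of the homogeneous localization of
the filtered Rees ring `R^♮ = ⊕_i R_{≥i}T^i` at `rT^n` — identified (via `T ↦ 1`) with
the subset `R + (1/r)R_{≥n} + (1/r²)R_{≥2n} + ⋯ = {s/r^j | s ∈ R_{≥jn}}` of `R_r` —
equals all of the localization `R_r`. -/
theorem stmt9 (R₀ : Type) [CommRing R₀] (R : Type) [CommRing R] [Algebra R₀ R]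
    (𝒜 : ℕ → Submodule R₀ R) [GradedAlgebra 𝒜] [Algebra.FiniteType R₀ R]
    (r : R) (dr n : ℕ) (hr : r ∈ 𝒜 dr) (hn : 1 ≤ n) (hdr : n < dr) :
    ∀ x : Localization.Away r, ∃ (j : ℕ) (s : R),
      s ∈ (⨆ i : ℕ, ⨆ _ : j * n ≤ i, 𝒜 i) ∧
        x = Localization.mk s (⟨r ^ j, ⟨j, rfl⟩⟩ : Submonoid.powers r) := by
  intro x
  obtain ⟨⟨a, sden⟩, rfl⟩ := IsLocalization.mk'_surjective (Submonoid.powers r) x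
  obtain ⟨k, hk⟩ := sden.2
  refine ⟨k + k * n, a * r ^ (k * n), ?_, ?_⟩
  · refine mul_mem_aux R₀ R 𝒜 _ a _ (k * n * dr) (SetLike.pow_mem_graded _ hr) ?_
    calc (k + k * n) * n = k * n * (n + 1) := by ring
      _ ≤ k * n * dr := Nat.mul_le_mul_left _ hdr
  · have hsden : sden = ⟨r ^ k, ⟨k, rfl⟩⟩ := Subtype.ext hk.symm
    rw [hsden, ← Localization.mk_eq_mk']
    have : (⟨r ^ (k + k * n), k + k * n, rfl⟩ : Submonoid.powers r)
        = (⟨r ^ k, k, rfl⟩ : Submonoid.powers r) * ⟨r ^ (k * n), k * n, rfl⟩ := by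
      ext; simp [pow_add]
    rw [this, ← Localization.mk_mul]
    have h1 : Localization.mk (r ^ (k * n)) (⟨r ^ (k * n), k * n, rfl⟩ : Submonoid.powers r) = 1 :=
      Localization.mk_self (⟨r ^ (k * n), k * n, rfl⟩ : Submonoid.powers r)
    rw [h1, mul_one]
end
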